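/- Let m be a positive integer. Let R ∈ ℝ^{(m+1)×(m+1)} be upper triangular and invertible, with leading m×m principal submatrix R_m and ρ = R_{m+1,m+1} its bottom-right entry. Let Ĥ ∈ ℝ^{(m+1)×m} be a matrix whose last row equals h^{(h)}·e_mᵀ for a scalar h^{(h)} ∈ ℝ, and let H̄ = R·Ĥ·R_m⁻¹. Then the last row of H̄ equals h·e_mᵀ with h = H̄_{m+1,m} (i.e., H̄_{m+1,j} = 0 for all j < m), and h^{(h)}/(R_m)_{m,m} = h/ρ, i.e., h^{(h)}·ρ = h·(R_m)_{m,m}. -/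

import Mathlib

/-!
The last row of an upper triangular matrix `M` is `M_{tt} e_tᵀ`. Hence the last row of `R Ĥ` is
`ρ h⁽ʰ⁾ e_mᵀ`, and since `R_m R_m⁻¹ = 1`, the last row of `R_m⁻¹` is `(R_m)_{mm}⁻¹ e_mᵀ`.
So the last row of `H̄ = (R Ĥ) R_m⁻¹` is `ρ h⁽ʰ⁾ (R_m)_{mm}⁻¹ e_mᵀ`.
-/

namespace Matrix

section IsTop

variable {ι κ α : Type*} [Fintype ι] [LinearOrder ι] {t : ι}

theorem IsUpperTriangular.mul_apply_of_isTop [NonUnitalNonAssocSemiring α] {M : Matrix ι ι α}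
    (hM : M.IsUpperTriangular) (ht : IsTop t) (A : Matrix ι κ α) (j : κ) :
    (M * A) t j = M t t * A t j :=
  (mul_apply).trans <| Finset.sum_eq_single t
    (fun k _ hk => by rw [hM ((ht k).lt_of_ne hk), zero_mul]) (by simp)

variable [CommRing α] {M : Matrix ι ι α}

theorem IsUpperTriangular.mul_inv_apply_of_isTop (hM : M.IsUpperTriangular) (hdet : IsUnit M.det)
    (ht : IsTop t) (j : ι) : M t t * M⁻¹ t j = (1 : Matrix ι ι α) t j := by
  rw [← hM.mul_apply_of_isTop ht, mul_nonsing_inv M hdet]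

theorem IsUpperTriangular.inv_apply_of_isTop_of_ne (hM : M.IsUpperTriangular)
    (hdet : IsUnit M.det) (ht : IsTop t) {j : ι} (hj : j ≠ t) : M⁻¹ t j = 0 := by
  -- `M⁻¹ t t` inverts `M t t`, which kills `M t t * M⁻¹ t j = 0`.
  have hself := hM.mul_inv_apply_of_isTop hdet ht t
  have hne := hM.mul_inv_apply_of_isTop hdet ht j
  rw [one_apply_eq] at hself
  rw [one_apply_ne hj.symm] at hne
  linear_combination M⁻¹ t t * hne - M⁻¹ t j * hself

end IsTop

section castSucc

variable {α : Type*} {n : ℕ} {R : Matrix (Fin (n + 1)) (Fin (n + 1)) α}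

theorem IsUpperTriangular.submatrix_castSucc [Zero α] (hR : R.IsUpperTriangular) :
    (R.submatrix Fin.castSucc Fin.castSucc).IsUpperTriangular :=
  fun _ _ hij => hR (Fin.castSucc_lt_castSucc_iff.2 hij)

theorem IsUpperTriangular.isUnit_submatrix_castSucc [CommRing α] (hR : R.IsUpperTriangular)
    (hunit : IsUnit R) : IsUnit (R.submatrix Fin.castSucc Fin.castSucc) := by
  have hdet :
      R.det = (R.submatrix Fin.castSucc Fin.castSucc).det * R (Fin.last n) (Fin.last n) := by
    rw [det_of_isUpperTriangular hR, det_of_isUpperTriangular hR.submatrix_castSucc,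
      Fin.prod_univ_castSucc]
    rfl
  rw [isUnit_iff_isUnit_det] at hunit ⊢
  exact isUnit_of_mul_isUnit_left (hdet ▸ hunit)

end castSucc

end Matrix

/-- Proposition 2.1, Eq. (2.13): with `R ∈ ℝ^{(m+1)×(m+1)}` upper
triangular invertible, `Rm` its leading principal submatrix, `ρ = R_{m+1,m+1}`,
`Ĥ ∈ ℝ^{(m+1)×m}` with last row `h⁽ʰ⁾·e_mᵀ`, and `H̄ = R·Ĥ·Rm⁻¹`, the last row of
`H̄` equals `h·e_mᵀ` with `h = H̄_{m+1,m}` (i.e., `H̄_{m+1,j} = 0` for `j < m`), and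
`h⁽ʰ⁾/(Rm)_{m,m} = h/ρ`, i.e., `h⁽ʰ⁾·ρ = h·(Rm)_{m,m}`. -/
theorem arnoldi_hessenberg_subdiagonal_relation
    (m : ℕ) (hm : 0 < m)
    (R : Matrix (Fin (m + 1)) (Fin (m + 1)) ℝ)
    (htri : ∀ i j : Fin (m + 1), (j : ℕ) < (i : ℕ) → R i j = 0)
    (hinv : IsUnit R)
    (Rm : Matrix (Fin m) (Fin m) ℝ)
    (hRm : Rm = R.submatrix Fin.castSucc Fin.castSucc)
    (ρ : ℝ) (hρ : ρ = R (Fin.last m) (Fin.last m))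
    (Hhat : Matrix (Fin (m + 1)) (Fin m) ℝ) (hh : ℝ)
    (hrow : ∀ j : Fin m,
      Hhat (Fin.last m) j = hh * (Pi.single (⟨m - 1, by omega⟩ : Fin m) (1 : ℝ) : Fin m → ℝ) j)
    (Hbar : Matrix (Fin (m + 1)) (Fin m) ℝ)
    (hHbar : Hbar = R * Hhat * Rm⁻¹) :
    (∀ j : Fin m, j ≠ ⟨m - 1, by omega⟩ → Hbar (Fin.last m) j = 0) ∧
    hh * ρ = Hbar (Fin.last m) ⟨m - 1, by omega⟩ * Rm ⟨m - 1, by omega⟩ ⟨m - 1, by omega⟩ := by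
  set p : Fin m := ⟨m - 1, by omega⟩
  have hp : IsTop p := fun j => Fin.le_def.2 (by simp only [p]; omega)
  have hR : R.IsUpperTriangular := fun i j hij => htri i j hij
  have hRm_tri : Rm.IsUpperTriangular := hRm ▸ hR.submatrix_castSucc
  have hRm_det : IsUnit Rm.det :=
    hRm ▸ (Matrix.isUnit_iff_isUnit_det _).1 (hR.isUnit_submatrix_castSucc hinv)
  have hHhat_last : Hhat (Fin.last m) = hh • Pi.single p 1 := funext hrow
  have hlast : ∀ j, Hbar (Fin.last m) j = ρ * hh * Rm⁻¹ p j := fun j => by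
    rw [hHbar, Matrix.mul_assoc, hR.mul_apply_of_isTop (fun _ => Fin.le_last _), ← hρ,
      Matrix.mul_apply', hHhat_last, smul_dotProduct, single_one_dotProduct,
      smul_eq_mul, mul_assoc]
  refine ⟨fun j hj => ?_, ?_⟩
  · rw [hlast, hRm_tri.inv_apply_of_isTop_of_ne hRm_det hp hj, mul_zero]
  · have hdiag := hRm_tri.mul_inv_apply_of_isTop hRm_det hp p
    rw [Matrix.one_apply_eq] at hdiag
    rw [hlast]
    linear_combination (-(ρ * hh)) * hdiag
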